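/- arXiv:2502.09584 — 2 statements merged into one kernel-verified Lean document; each statement's English description precedes it below -/
import Mathlib

section
/- Let w ∼ w' be neighboring strings and ε > 0, δ ∈ (0,1). Define the set BAD ⊆ ℕ by BAD = [|Compress(w)| + 1, |Compress(w')| + 1] (the integer interval) if |Compress(w')| ≥ |Compress(w)|, and BAD = {|Compress(w)| + 1} otherwise. Then Pr[|DPCompress(w, ε, δ)| ∈ BAD] ≤ δ. -/
/-!
A length in `BAD` means a padding `p ≤ GS + 1`, because `|Compress(w')| ≤ |Compress(w)| + GS`.
That forces `Z + k ≤ GS + 1`, i.e. `Z ≤ t := (GS/ε) · ln (2δ)`. Bounding the Laplace density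
`e^{-|x|/b}/(2b)` by `e^{x/b}/(2b)` gives `Pr[Z ≤ t] ≤ e^{t/b}/2 = δ` without splitting on the sign
of `t`.
-/

open MeasureTheory

/-- `w ∼ w'`: strings of length `n` (1-indexed positions) differing in exactly
one position. -/
def Neighbor {α : Type*} (n : ℕ) (w w' : ℕ → α) : Prop :=
  ∃ j, 1 ≤ j ∧ j ≤ n ∧ w j ≠ w' j ∧ ∀ i, i ≠ j → w i = w' i

/-- The Laplace distribution with mean `0` and scale parameter `b`, given by the
density `z ↦ (1/(2b))·exp(−|z|/b)` with respect to Lebesgue measure. -/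
noncomputable def laplaceMeasure (b : ℝ) : Measure ℝ :=
  volume.withDensity (fun z => ENNReal.ofReal ((1 / (2 * b)) * Real.exp (-|z| / b)))

open Set Real

lemma laplaceMeasure_Iic_le {b : ℝ} (hb : 0 < b) (t : ℝ) :
    laplaceMeasure b (Iic t) ≤ ENNReal.ofReal (exp (t / b) / 2) := by
  have hdensity : ∀ x, ENNReal.ofReal (1 / (2 * b) * exp (-|x| / b))
      ≤ ENNReal.ofReal (1 / (2 * b) * exp (b⁻¹ * x)) := fun x => by
    rw [inv_mul_eq_div]
    gcongr
    exact neg_abs_le x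
  calc laplaceMeasure b (Iic t)
      ≤ ∫⁻ x in Iic t, ENNReal.ofReal (1 / (2 * b) * exp (b⁻¹ * x)) := by
        rw [laplaceMeasure, withDensity_apply _ measurableSet_Iic]
        exact lintegral_mono hdensity
    _ = ENNReal.ofReal (exp (t / b) / 2) := by
        have hb' : 0 < b⁻¹ := inv_pos.mpr hb
        rw [← ofReal_integral_eq_lintegral_ofReal
          ((integrableOn_exp_mul_Iic hb' t).const_mul _) (.of_forall fun x => by positivity),
          integral_const_mul, integral_exp_mul_Iic hb' t, inv_mul_eq_div]
        field_simp

/-- The length of `DPCompress(w, ε, δ)` when the Laplace sample is `z`: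
`|Compress(w)| + p` with padding `p = max {1, ⌈z + k⌉}`. -/
noncomputable def dpLen (c : ℕ) (k z : ℝ) : ℕ :=
  c + (max 1 ⌈z + k⌉).toNat

lemma le_sub_of_dpLen_le_add {c m : ℕ} {k z : ℝ} (h : dpLen c k z ≤ c + m) : z ≤ m - k := by
  have hceil : ⌈z + k⌉ ≤ (m : ℤ) := by
    unfold dpLen at h
    omega
  have hle : z + k ≤ m := by exact_mod_cast Int.ceil_le.mp hceil
  linarith

lemma le_add_of_mem_bad {c c' g x : ℕ} (hc' : c' ≤ c + g)
    (hx : x ∈ (if c ≤ c' then Icc (c + 1) (c' + 1) else {c + 1} : Set ℕ)) :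
    x ≤ c + (g + 1) := by
  split_ifs at hx
  · exact hx.2.trans (by omega)
  · rw [mem_singleton_iff.mp hx]
    omega

theorem dpcompress_bad_event_general {α β : Type*} (n : ℕ)
    (Compress : (ℕ → α) → List β) (GS : ℕ) (hGSpos : 0 < GS)
    (hGS : ∀ w w' : ℕ → α, Neighbor n w w' →
      |((Compress w).length : ℤ) - ((Compress w').length : ℤ)| ≤ (GS : ℤ))
    (ε δ : ℝ) (hε : 0 < ε) (hδ0 : 0 < δ)
    (w w' : ℕ → α) (hnb : Neighbor n w w') :
    laplaceMeasure ((GS : ℝ) / ε)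
        {z : ℝ | dpLen (Compress w).length
            ((GS : ℝ) / ε * Real.log (1 / (2 * δ)) + GS + 1) z ∈
          (if (Compress w).length ≤ (Compress w').length then
              Set.Icc ((Compress w).length + 1) ((Compress w').length + 1)
            else {(Compress w).length + 1} : Set ℕ)}
      ≤ ENNReal.ofReal δ := by
  set b := (GS : ℝ) / ε
  have hb : 0 < b := div_pos (by exact_mod_cast hGSpos) hε
  have hc' : (Compress w').length ≤ (Compress w).length + GS := by
    have := (abs_le.mp (hGS w w' hnb)).1
    omega
  have hthreshold : ((GS + 1 : ℕ) : ℝ) - (b * log (1 / (2 * δ)) + GS + 1) = b * log (2 * δ) := by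
    rw [one_div, log_inv]
    push_cast
    ring
  calc _ ≤ laplaceMeasure b (Iic (b * log (2 * δ))) := measure_mono fun z hz =>
        hthreshold ▸ le_sub_of_dpLen_le_add (le_add_of_mem_bad hc' hz)
    _ ≤ ENNReal.ofReal (exp (b * log (2 * δ) / b) / 2) := laplaceMeasure_Iic_le hb _
    _ = ENNReal.ofReal δ := by
        rw [mul_div_cancel_left₀ _ hb.ne', exp_log (by positivity)]
        ring_nf

/-- Claim: the bad event has probability at most `δ`.
Let `w ∼ w'` be neighboring strings and `ε > 0`, `δ ∈ (0,1)`.  With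
`BAD = [|Compress(w)|+1, |Compress(w')|+1]` if `|Compress(w')| ≥ |Compress(w)|`
and `BAD = {|Compress(w)|+1}` otherwise,
`Pr[|DPCompress(w, ε, δ)| ∈ BAD] ≤ δ`. -/
theorem dpcompress_bad_event {α β : Type*} (n : ℕ) (hn : 1 ≤ n)
    (Compress : (ℕ → α) → List β) (GS : ℕ) (hGSpos : 0 < GS)
    (hGS : ∀ w w' : ℕ → α, Neighbor n w w' →
      |((Compress w).length : ℤ) - ((Compress w').length : ℤ)| ≤ (GS : ℤ))
    (ε δ : ℝ) (hε : 0 < ε) (hδ0 : 0 < δ) (hδ1 : δ < 1)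
    (w w' : ℕ → α) (hnb : Neighbor n w w') :
    laplaceMeasure ((GS : ℝ) / ε)
        {z : ℝ | dpLen (Compress w).length
            ((GS : ℝ) / ε * Real.log (1 / (2 * δ)) + GS + 1) z ∈
          (if (Compress w).length ≤ (Compress w').length then
              Set.Icc ((Compress w).length + 1) ((Compress w').length + 1)
            else {(Compress w).length + 1} : Set ℕ)}
      ≤ ENNReal.ofReal δ :=
  dpcompress_bad_event_general n Compress GS hGSpos hGS ε δ hε hδ0 w w' hnb
end

section
/- Let w ∼ w' ∈ Σⁿ be neighboring strings, and let (B₁,…,B_t) = Compress(w) and (B'₁,…,B'_{t'}) = Compress(w') be their LZ77 block decompositions. Then t' − t ≤ t₂, where t₂ is the number of type-2 blocks among B₁,…,B_t. -/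
/-- A single LZ77 block `[q, len, c]`. -/
structure LZBlock (α : Type*) where
  q : ℕ
  len : ℕ
  c : α

/-- `s_i` (1-indexed start position of the `i`-th block, `i` 0-indexed). -/
def blockStart {α : Type*} (B : List (LZBlock α)) (i : ℕ) : ℕ :=
  1 + ((B.take i).map (fun b => b.len + 1)).sum

/-- `f_i` (1-indexed final position of the `i`-th block, `i` 0-indexed). -/
def blockFin {α : Type*} (B : List (LZBlock α)) (i : ℕ) : ℕ :=
  ((B.take (i + 1)).map (fun b => b.len + 1)).sum

/-- `ℓ_i`, recovered as `f_i - s_i`. -/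
def lenAt {α : Type*} (B : List (LZBlock α)) (i : ℕ) : ℕ :=
  blockFin B i - blockStart B i

/-- Non-overlapping LZ77 parse, sliding window `W`, of the length-`n` string `w`
(1-indexed positions). -/
def IsLZ77Parse {α : Type*} (W n : ℕ) (w : ℕ → α) (B : List (LZBlock α)) : Prop :=
  ((B.map (fun b => b.len + 1)).sum = n) ∧
  ∀ i : Fin B.length,
    ((B.get i).c = w (blockStart B i.1 + (B.get i).len)) ∧
    ((B.get i).len = 0 → (B.get i).q = 0) ∧
    (0 < (B.get i).len →
      1 ≤ (B.get i).q ∧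
      blockStart B i.1 ≤ (B.get i).q + W ∧
      (B.get i).q + (B.get i).len ≤ blockStart B i.1 ∧
      ∀ d < (B.get i).len, w ((B.get i).q + d) = w (blockStart B i.1 + d)) ∧
    (blockStart B i.1 + (B.get i).len + 1 ≤ n →
      ¬ ∃ q', 1 ≤ q' ∧ blockStart B i.1 ≤ q' + W ∧
          q' + (B.get i).len + 1 ≤ blockStart B i.1 ∧
          ∀ d ≤ (B.get i).len, w (q' + d) = w (blockStart B i.1 + d))

/-- LZ77 parse with self-referencing (unbounded window). -/
def IsLZ77SRParse {α : Type*} (n : ℕ) (w : ℕ → α) (B : List (LZBlock α)) : Prop :=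
  ((B.map (fun b => b.len + 1)).sum = n) ∧
  ∀ i : Fin B.length,
    ((B.get i).c = w (blockStart B i.1 + (B.get i).len)) ∧
    ((B.get i).len = 0 → (B.get i).q = 0) ∧
    (0 < (B.get i).len →
      1 ≤ (B.get i).q ∧
      (B.get i).q < blockStart B i.1 ∧
      ∀ d < (B.get i).len, w ((B.get i).q + d) = w (blockStart B i.1 + d)) ∧
    (blockStart B i.1 + (B.get i).len + 1 ≤ n →
      ¬ ∃ q', 1 ≤ q' ∧ q' < blockStart B i.1 ∧
          ∀ d ≤ (B.get i).len, w (q' + d) = w (blockStart B i.1 + d))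

/-- `M_i`: the set of (0-indexed) blocks of `B'` that start inside block `i` of `B`. -/
def Mset {α : Type*} (B B' : List (LZBlock α)) (i : ℕ) : Finset ℕ :=
  (Finset.range B'.length).filter
    (fun k => blockStart B i ≤ blockStart B' k ∧ blockStart B' k ≤ blockFin B i)

/-- Indices of type-`m` blocks of `B` (relative to `B'`). -/
def typeSet {α : Type*} (B B' : List (LZBlock α)) (m : ℕ) : Finset ℕ :=
  (Finset.range B.length).filter (fun i => (Mset B B' i).card = m)

/-- Number of bits used to encode each block. -/
def codeLen (n cardS : ℕ) : ℕ :=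
  2 * Nat.clog 2 n + Nat.clog 2 cardS

/-! If a block of `w'` lies inside the copied part of a block `[q, ℓ, c]` of `w`, at offset `δ`,
then `w'` also contains its text together with the following character at `q + δ`, which
contradicts the maximality of the parse unless the edited position lies in that source or in the
block itself. For two consecutive blocks of `w'` these sources are disjoint and lie before the
block of `w`, and their targets are disjoint and lie inside it; so a single edit cannot spoil both,
at most two blocks of `w'` start inside each block of `w`, and `t' ≤ t + t₂`. -/

lemma exists_le_lt_succ {β : Type*} [LinearOrder β] (f : ℕ → β) {p : β} {N : ℕ}
    (h0 : f 0 ≤ p) (hN : p < f N) : ∃ i < N, f i ≤ p ∧ p < f (i + 1) := by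
  induction N with
  | zero => exact absurd hN (not_lt.2 h0)
  | succ N ih =>
    by_cases hp : p < f N
    · obtain ⟨i, hi, h⟩ := ih hp
      exact ⟨i, by omega, h⟩
    · exact ⟨N, N.lt_succ_self, not_lt.1 hp, hN⟩

section BlockPositions

variable {α : Type*} {B : List (LZBlock α)}

@[simp]
lemma blockStart_zero : blockStart B 0 = 1 :=
  rfl

lemma blockStart_succ_eq_blockFin_add_one (i : ℕ) : blockStart B (i + 1) = blockFin B i + 1 :=
  Nat.add_comm _ _

lemma blockStart_succ {i : ℕ} (hi : i < B.length) :
    blockStart B (i + 1) = blockStart B i + (B.get ⟨i, hi⟩).len + 1 := by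
  unfold blockStart
  rw [List.map_take, List.map_take, List.sum_take_succ _ _ (by simpa using hi)]
  simp only [List.getElem_map, List.get_eq_getElem]
  omega

lemma blockFin_eq {i : ℕ} (hi : i < B.length) :
    blockFin B i = blockStart B i + (B.get ⟨i, hi⟩).len := by
  have := blockStart_succ hi
  rw [blockStart_succ_eq_blockFin_add_one] at this
  omega

lemma blockStart_mono : Monotone (blockStart B) := fun _ _ hij =>
  Nat.add_le_add_left
    (((List.take_sublist_take_left hij).map _).sum_le_sum fun _ _ => Nat.zero_le _) 1

lemma blockFin_le_sum (i : ℕ) : blockFin B i ≤ (B.map fun b => b.len + 1).sum :=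
  ((List.take_sublist _ _).map _).sum_le_sum fun _ _ => Nat.zero_le _

lemma blockStart_length : blockStart B B.length = (B.map fun b => b.len + 1).sum + 1 := by
  rw [blockStart, List.take_length, Nat.add_comm]

end BlockPositions

namespace IsLZ77Parse

variable {α : Type*} {W n : ℕ} {w : ℕ → α} {B : List (LZBlock α)}

lemma blockFin_le (hB : IsLZ77Parse W n w B) (i : ℕ) : blockFin B i ≤ n :=
  hB.1 ▸ blockFin_le_sum i

lemma lt_length_of_blockStart_le (hB : IsLZ77Parse W n w B) {k : ℕ}
    (hk : blockStart B k ≤ n) : k < B.length := by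
  by_contra! h
  have := blockStart_mono (B := B) h
  rw [blockStart_length, hB.1] at this
  omega

lemma q_add_len_le_blockStart (hB : IsLZ77Parse W n w B) {i : ℕ} (hi : i < B.length) :
    (B.get ⟨i, hi⟩).q + (B.get ⟨i, hi⟩).len ≤ blockStart B i := by
  obtain ⟨-, hq0, hcopy, -⟩ := hB.2 ⟨i, hi⟩
  rcases Nat.eq_zero_or_pos (B.get ⟨i, hi⟩).len with h | h
  · rw [hq0 h, h]
    exact Nat.zero_le _
  · exact (hcopy h).2.2.1

lemma len_le_of_copy (hB : IsLZ77Parse W n w B) {r : ℕ} (hr : r < B.length) {q m : ℕ}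
    (hq : 1 ≤ q) (hqW : blockStart B r ≤ q + W) (hqm : q + m ≤ blockStart B r)
    (hcopy : ∀ d < m, w (q + d) = w (blockStart B r + d)) (hmn : blockStart B r + m ≤ n) :
    m ≤ (B.get ⟨r, hr⟩).len := by
  by_contra! hlt
  have hmax := (hB.2 ⟨r, hr⟩).2.2.2
  dsimp only at hmax
  exact hmax (by omega) ⟨q, hq, hqW, by omega, fun d hd => hcopy d (by omega)⟩

end IsLZ77Parse

section TwoParses

variable {α : Type*} {W n : ℕ} {w w' : ℕ → α} {B B' : List (LZBlock α)}

lemma mem_Mset {i k : ℕ} :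
    k ∈ Mset B B' i ↔
      k < B'.length ∧ blockStart B i ≤ blockStart B' k ∧ blockStart B' k ≤ blockFin B i := by
  simp [Mset]

lemma exists_ne_of_block_nested (hB : IsLZ77Parse W n w B) (hB' : IsLZ77Parse W n w' B')
    {i k : ℕ} (hi : i < B.length) (hk : k < B'.length)
    (hstart : blockStart B i ≤ blockStart B' k) (hend : blockStart B' (k + 1) ≤ blockFin B i) :
    ∃ d ≤ (B'.get ⟨k, hk⟩).len,
      w ((B.get ⟨i, hi⟩).q + (blockStart B' k - blockStart B i) + d) ≠
          w' ((B.get ⟨i, hi⟩).q + (blockStart B' k - blockStart B i) + d) ∨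
        w (blockStart B' k + d) ≠ w' (blockStart B' k + d) := by
  have hk_succ := blockStart_succ hk
  have hfin := blockFin_eq hi
  obtain ⟨hq, hqW, -, hcopy⟩ := (hB.2 ⟨i, hi⟩).2.2.1 (by omega)
  dsimp only at hqW hcopy
  have hsrc := hB.q_add_len_le_blockStart hi
  have hfin_le := hB.blockFin_le i
  by_contra! hagree
  have := hB'.len_le_of_copy hk (q := (B.get ⟨i, hi⟩).q + (blockStart B' k - blockStart B i))
    (m := (B'.get ⟨k, hk⟩).len + 1) (by omega) (by omega) (by omega)
    (fun d hd => ?_) (by omega)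
  · omega
  · obtain ⟨hsrc_eq, htgt_eq⟩ := hagree d (by omega)
    rw [← hsrc_eq, ← htgt_eq, Nat.add_assoc, hcopy _ (by omega)]
    congr 1
    omega

lemma Neighbor.blockFin_lt_blockStart_add_two (hnb : Neighbor n w w')
    (hB : IsLZ77Parse W n w B) (hB' : IsLZ77Parse W n w' B') {i k : ℕ} (hi : i < B.length)
    (hstart : blockStart B i ≤ blockStart B' k) : blockFin B i < blockStart B' (k + 2) := by
  obtain ⟨j, -, -, -, hagree⟩ := hnb
  have heq_j : ∀ p, w p ≠ w' p → p = j := fun p hp => by_contra fun h => hp (hagree p h)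
  by_contra! hend
  have hfin_le := hB.blockFin_le i
  have hmono := blockStart_mono (B := B') (show k + 1 ≤ k + 2 by omega)
  have hk₁ : k + 1 < B'.length := hB'.lt_length_of_blockStart_le (by omega)
  have hk : k < B'.length := by omega
  have hk_succ := blockStart_succ hk
  have hk₁_succ : blockStart B' (k + 2) = _ := blockStart_succ hk₁
  have hfin := blockFin_eq hi
  have hsrc := hB.q_add_len_le_blockStart hi
  obtain ⟨d, hd, hne⟩ := exists_ne_of_block_nested hB hB' hi hk hstart (by omega)
  obtain ⟨d₁, hd₁, hne₁⟩ := exists_ne_of_block_nested hB hB' hi hk₁ (by omega) (by omega)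
  rcases hne with hne | hne <;> rcases hne₁ with hne₁ | hne₁ <;>
    have := heq_j _ hne <;> have := heq_j _ hne₁ <;> omega

lemma card_Mset_le_two (hnb : Neighbor n w w') (hB : IsLZ77Parse W n w B)
    (hB' : IsLZ77Parse W n w' B') {i : ℕ} (hi : i < B.length) : (Mset B B' i).card ≤ 2 := by
  rcases (Mset B B' i).eq_empty_or_nonempty with hempty | hne
  · simp [hempty]
  obtain ⟨a, ha, hmin⟩ : ∃ a ∈ Mset B B' i, ∀ k ∈ Mset B B' i, a ≤ k :=
    ⟨_, Finset.min'_mem _ hne, fun k hk => Finset.min'_le _ k hk⟩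
  have hfirst := hnb.blockFin_lt_blockStart_add_two hB hB' hi (mem_Mset.1 ha).2.1
  calc (Mset B B' i).card ≤ (Finset.Icc a (a + 1)).card := Finset.card_le_card fun k hk => ?_
    _ = 2 := by simp only [Nat.card_Icc]; omega
  obtain ⟨-, -, hk_le⟩ := mem_Mset.1 hk
  refine Finset.mem_Icc.2 ⟨hmin k hk, ?_⟩
  by_contra! hlt
  have := blockStart_mono (B := B') (show a + 2 ≤ k by omega)
  omega

lemma IsLZ77Parse.exists_mem_Mset (hB : IsLZ77Parse W n w B) (hB' : IsLZ77Parse W n w' B')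
    {k : ℕ} (hk : k < B'.length) : ∃ i < B.length, k ∈ Mset B B' i := by
  have hpos : 1 ≤ blockStart B' k := blockStart_zero (B := B') ▸ blockStart_mono (Nat.zero_le k)
  have hfin := blockFin_eq hk
  have hfin_le := hB'.blockFin_le k
  obtain ⟨i, hi, hle, hlt⟩ := exists_le_lt_succ (blockStart B) (p := blockStart B' k)
    (by rwa [blockStart_zero]) (by rw [blockStart_length, hB.1]; omega)
  rw [blockStart_succ_eq_blockFin_add_one] at hlt
  exact ⟨i, hi, mem_Mset.2 ⟨hk, hle, by omega⟩⟩

lemma length_le_sum_card_Mset (hB : IsLZ77Parse W n w B) (hB' : IsLZ77Parse W n w' B') :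
    B'.length ≤ ∑ i ∈ Finset.range B.length, (Mset B B' i).card :=
  calc B'.length = (Finset.range B'.length).card := (Finset.card_range _).symm
    _ ≤ ((Finset.range B.length).biUnion (Mset B B')).card := Finset.card_le_card fun k hk => by
        obtain ⟨i, hi, hki⟩ := hB.exists_mem_Mset hB' (Finset.mem_range.1 hk)
        exact Finset.mem_biUnion.2 ⟨i, Finset.mem_range.2 hi, hki⟩
    _ ≤ _ := Finset.card_biUnion_le

end TwoParses

/-- Claim: `t' − t ≤ t₂`.
For neighboring strings `w ∼ w'` with LZ77 block decompositions `B` (with `t`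
blocks) and `B'` (with `t'` blocks), `t' − t` is at most the number `t₂` of
type-2 blocks among the blocks of `B`. -/
theorem lz77_block_count_diff {α : Type*} (n : ℕ) (w w' : ℕ → α)
    (hnb : Neighbor n w w')
    (B B' : List (LZBlock α))
    (hB : IsLZ77Parse n n w B) (hB' : IsLZ77Parse n n w' B') :
    ((B'.length : ℤ) - (B.length : ℤ)) ≤ ((typeSet B B' 2).card : ℤ) := by
  have hcount : B'.length ≤ B.length + (typeSet B B' 2).card :=
    calc B'.length ≤ ∑ i ∈ Finset.range B.length, (Mset B B' i).card :=
          length_le_sum_card_Mset hB hB'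
      _ ≤ ∑ i ∈ Finset.range B.length, (1 + if (Mset B B' i).card = 2 then 1 else 0) :=
          Finset.sum_le_sum fun i hi => by
            have := card_Mset_le_two hnb hB hB' (Finset.mem_range.1 hi)
            split_ifs <;> omega
      _ = B.length + (typeSet B B' 2).card := by
          rw [Finset.sum_add_distrib, typeSet, Finset.card_filter]
          simp
  omega
end
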